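/- Let (𝒞,𝒳,𝒟) be a localization triple in an additive category 𝒜 and let 𝒮 be the class of morphisms s of 𝒜 such that R(Q(s̄)) is an isomorphism in (𝒞∩𝒟)/𝒳. Then for every object A of 𝒜 the morphism r_A: Q(A) → A belongs to 𝒮, and for every object A ∈ 𝒞 the morphism j^A: A → R(A) belongs to 𝒮. -/

import Mathlib

open CategoryTheory CategoryTheory.Limits

universe w' w v u

namespace LiHomotopy

variable {𝒜 : Type u} [Category.{v} 𝒜] [Preadditive 𝒜] [HasZeroObject 𝒜]
  [HasBinaryBiproducts 𝒜]

/-- `f` factors through an object belonging to `X`. -/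
def FactorsThruSet (X : Set 𝒜) {A B : 𝒜} (f : A ⟶ B) : Prop :=
  ∃ (M : 𝒜) (_ : M ∈ X) (u : A ⟶ M) (v : M ⟶ B), f = u ≫ v

/-- A localization triple `(C, X, D)` in an additive category `𝒜`, consisting of
full additive subcategories `X ⊆ C ∩ D` together with the chosen approximation
sequences of Definition 3.2. -/
structure LocalizationTriple (C X D : Set 𝒜) where
  X_sub_C : X ⊆ C
  X_sub_D : X ⊆ D
  C_zero : ∀ Z : 𝒜, IsZero Z → Z ∈ C
  C_sum : ∀ {M N : 𝒜}, M ∈ C → N ∈ C → (M ⊞ N) ∈ C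
  X_zero : ∀ Z : 𝒜, IsZero Z → Z ∈ X
  X_sum : ∀ {M N : 𝒜}, M ∈ X → N ∈ X → (M ⊞ N) ∈ X
  D_zero : ∀ Z : 𝒜, IsZero Z → Z ∈ D
  D_sum : ∀ {M N : 𝒜}, M ∈ D → N ∈ D → (M ⊞ N) ∈ D
  /-- the chosen `C`-precover `Q(A) → A` -/
  Qobj : 𝒜 → 𝒜
  Wl : 𝒜 → 𝒜
  r : ∀ A : 𝒜, Qobj A ⟶ A
  ω : ∀ A : 𝒜, Wl A ⟶ Qobj A
  Qobj_mem : ∀ A : 𝒜, Qobj A ∈ C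
  r_precover : ∀ (A C' : 𝒜), C' ∈ C → ∀ g : C' ⟶ A, ∃ h : C' ⟶ Qobj A, h ≫ r A = g
  ω_r : ∀ A : 𝒜, ω A ≫ r A = 0
  ω_weakKernel : ∀ (A T : 𝒜) (g : T ⟶ Qobj A), g ≫ r A = 0 → ∃ h : T ⟶ Wl A, h ≫ ω A = g
  Wl_perp : ∀ (A C' : 𝒜), C' ∈ C → ∀ g : C' ⟶ Wl A, FactorsThruSet X g
  /-- the chosen `D`-preenvelope `A → R(A)` -/
  Robj : 𝒜 → 𝒜
  Wr : 𝒜 → 𝒜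
  j : ∀ A : 𝒜, A ⟶ Robj A
  τ : ∀ A : 𝒜, Robj A ⟶ Wr A
  Robj_mem : ∀ A : 𝒜, Robj A ∈ D
  j_preenvelope : ∀ (A D' : 𝒜), D' ∈ D → ∀ g : A ⟶ D', ∃ h : Robj A ⟶ D', j A ≫ h = g
  j_τ : ∀ A : 𝒜, j A ≫ τ A = 0
  τ_weakCokernel : ∀ (A T : 𝒜) (g : Robj A ⟶ T), j A ≫ g = 0 → ∃ h : Wr A ⟶ T, τ A ≫ h = g
  Wr_perp : ∀ (A D' : 𝒜), D' ∈ D → ∀ g : Wr A ⟶ D', FactorsThruSet X g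
  Qobj_mem_of_D : ∀ A : 𝒜, A ∈ D → Qobj A ∈ C ∩ D
  Robj_mem_of_C : ∀ A : 𝒜, A ∈ C → Robj A ∈ C ∩ D

/-- The class `𝒮` of morphisms `s` such that `R(Q(s̄))` is an isomorphism in the
stable category of `C ∩ D` modulo `X`, expressed via representatives. -/
def SClass {C X D : Set 𝒜} (L : LocalizationTriple C X D) : MorphismProperty 𝒜 :=
  fun A B s =>
    ∃ (sc : L.Qobj A ⟶ L.Qobj B) (sf : L.Robj (L.Qobj A) ⟶ L.Robj (L.Qobj B)),
      sc ≫ L.r B = L.r A ≫ s ∧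
      L.j (L.Qobj A) ≫ sf = sc ≫ L.j (L.Qobj B) ∧
      ∃ g : L.Robj (L.Qobj B) ⟶ L.Robj (L.Qobj A),
        FactorsThruSet X (sf ≫ g - 𝟙 _) ∧ FactorsThruSet X (g ≫ sf - 𝟙 _)

section Helpers

variable {C X D : Set 𝒜} (L : LocalizationTriple C X D)

lemma FactorsThruSet.precomp {X : Set 𝒜} {A B B' : 𝒜} (u : A ⟶ B) {f : B ⟶ B'}
    (hf : FactorsThruSet X f) : FactorsThruSet X (u ≫ f) := by
  obtain ⟨M, hM, a, b, hab⟩ := hf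
  exact ⟨M, hM, u ≫ a, b, by rw [hab, Category.assoc]⟩

lemma FactorsThruSet.postcomp {X : Set 𝒜} {A B B' : 𝒜} {f : A ⟶ B}
    (hf : FactorsThruSet X f) (v : B ⟶ B') : FactorsThruSet X (f ≫ v) := by
  obtain ⟨M, hM, a, b, hab⟩ := hf
  exact ⟨M, hM, a, b ≫ v, by rw [hab, Category.assoc]⟩

lemma FactorsThruSet.neg {X : Set 𝒜} {A B : 𝒜} {f : A ⟶ B}
    (hf : FactorsThruSet X f) : FactorsThruSet X (-f) := by
  obtain ⟨M, hM, a, b, hab⟩ := hf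
  exact ⟨M, hM, a, -b, by rw [hab]; simp⟩

lemma factorsThruSet_zero (L : LocalizationTriple C X D) {A B : 𝒜} :
    FactorsThruSet X (0 : A ⟶ B) := by
  obtain ⟨Z, hZ⟩ := HasZeroObject.zero (C := 𝒜)
  exact ⟨Z, L.X_zero Z hZ, 0, 0, by simp⟩

lemma factorsThruSet_add (L : LocalizationTriple C X D) {A B : 𝒜} {f g : A ⟶ B}
    (hf : FactorsThruSet X f) (hg : FactorsThruSet X g) : FactorsThruSet X (f + g) := by
  obtain ⟨M, hM, a, b, hab⟩ := hf
  obtain ⟨N, hN, c, d, hcd⟩ := hg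
  refine ⟨M ⊞ N, L.X_sum hM hN, biprod.lift a c, biprod.desc b d, by
    simp [hab, hcd]⟩

/-- If `T ∈ C` and `f ≫ r A = 0` then `f` factors through `X`. -/
lemma cover_lemma {A T : 𝒜} (hT : T ∈ C) (f : T ⟶ L.Qobj A) (hf : f ≫ L.r A = 0) :
    FactorsThruSet X f := by
  obtain ⟨h, hh⟩ := L.ω_weakKernel A T f hf
  have := (L.Wl_perp A T hT h).postcomp (L.ω A)
  rwa [hh] at this

/-- If `B ∈ D` and `j A ≫ f` factors through `X` then `f` factors through `X`. -/
lemma env_lemma {A B : 𝒜} (hB : B ∈ D) (f : L.Robj A ⟶ B)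
    (h : FactorsThruSet X (L.j A ≫ f)) : FactorsThruSet X f := by
  obtain ⟨M, hM, u, v, huv⟩ := h
  obtain ⟨u', hu'⟩ := L.j_preenvelope A M (L.X_sub_D hM) u
  have h0 : L.j A ≫ (f - u' ≫ v) = 0 := by
    simp only [Preadditive.comp_sub, huv, ← hu', Category.assoc, sub_self]
  obtain ⟨h', hh'⟩ := L.τ_weakCokernel A B _ h0
  have h1 : FactorsThruSet X (f - u' ≫ v) := by
    have := (L.Wr_perp A B hB h').precomp (L.τ A)
    rwa [hh'] at this
  have h2 : FactorsThruSet X (u' ≫ v : L.Robj A ⟶ B) :=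
    FactorsThruSet.precomp u' ⟨M, hM, 𝟙 M, v, by simp⟩
  have := factorsThruSet_add L h1 h2
  rwa [sub_add_cancel] at this

end Helpers

theorem r_and_j_mem_SClass {C X D : Set 𝒜} (L : LocalizationTriple C X D) :
    (∀ A : 𝒜, SClass L (L.r A)) ∧ (∀ A : 𝒜, A ∈ C → SClass L (L.j A)) := by
  constructor
  · intro A
    -- `sc = r (Qobj A)`
    set QA := L.Qobj A
    set QQA := L.Qobj QA
    -- splitting of the precover `r QA : QQA ⟶ QA`
    obtain ⟨k, hk⟩ := L.r_precover QA QA (L.Qobj_mem A) (𝟙 QA)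
    obtain ⟨sf, hsf⟩ := L.j_preenvelope QQA (L.Robj QA) (L.Robj_mem QA)
      (L.r QA ≫ L.j QA)
    obtain ⟨g, hg⟩ := L.j_preenvelope QA (L.Robj QQA) (L.Robj_mem QQA)
      (k ≫ L.j QQA)
    refine ⟨L.r QA, sf, rfl, hsf, g, ?_, ?_⟩
    · -- `sf ≫ g - 𝟙` factors through `X`
      have hrk : FactorsThruSet X (L.r QA ≫ k - 𝟙 QQA) := by
        apply cover_lemma L (L.Qobj_mem QA)
        simp [hk, QQA]
      apply env_lemma L (L.Robj_mem QQA)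
      have : L.j QQA ≫ (sf ≫ g - 𝟙 _) = (L.r QA ≫ k - 𝟙 QQA) ≫ L.j QQA := by
        simp only [Preadditive.comp_sub, Preadditive.sub_comp, Category.comp_id,
          Category.id_comp, ← Category.assoc, hsf]
        rw [Category.assoc, hg, ← Category.assoc]
        simp [QQA]
      rw [this]
      exact hrk.postcomp _
    · -- `g ≫ sf - 𝟙` factors through `X`
      apply env_lemma L (L.Robj_mem QA)
      have : L.j QA ≫ (g ≫ sf - 𝟙 _) = 0 := by
        simp only [Preadditive.comp_sub, Category.comp_id, ← Category.assoc, hg]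
        rw [Category.assoc, hsf, ← Category.assoc, hk, Category.id_comp, sub_self]
      rw [this]
      exact factorsThruSet_zero L
  · intro A hA
    set QA := L.Qobj A
    set RA := L.Robj A
    set QRA := L.Qobj RA
    have hRA : RA ∈ D := L.Robj_mem A
    have hQRAD : QRA ∈ D := (L.Qobj_mem_of_D RA hRA).2
    -- splittings
    obtain ⟨k, hk⟩ := L.r_precover A A hA (𝟙 A)
    obtain ⟨k', hk'⟩ := L.r_precover RA RA (L.Robj_mem_of_C A hA).1 (𝟙 RA)
    -- `sc`
    obtain ⟨sc, hsc⟩ := L.r_precover RA QA (L.Qobj_mem A) (L.r A ≫ L.j A)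
    -- `sf`
    obtain ⟨sf, hsf⟩ := L.j_preenvelope QA (L.Robj QRA) (L.Robj_mem QRA)
      (sc ≫ L.j QRA)
    -- `p : RA ⟶ R(QA)` with `j A ≫ p = k ≫ j QA`
    obtain ⟨p, hp⟩ := L.j_preenvelope A (L.Robj QA) (L.Robj_mem QA) (k ≫ L.j QA)
    -- `g : R(QRA) ⟶ R(QA)` with `j QRA ≫ g = r RA ≫ p`
    obtain ⟨g, hg⟩ := L.j_preenvelope QRA (L.Robj QA) (L.Robj_mem QA) (L.r RA ≫ p)
    refine ⟨sc, sf, hsc, hsf, g, ?_, ?_⟩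
    · -- `sf ≫ g - 𝟙` factors through `X`
      have hrk : FactorsThruSet X (L.r A ≫ k - 𝟙 QA) := by
        apply cover_lemma L (L.Qobj_mem A)
        simp [hk, QA]
      apply env_lemma L (L.Robj_mem QA)
      have : L.j QA ≫ (sf ≫ g - 𝟙 _) = (L.r A ≫ k - 𝟙 QA) ≫ L.j QA := by
        simp only [Preadditive.comp_sub, Preadditive.sub_comp, Category.comp_id,
          Category.id_comp, ← Category.assoc, hsf]
        rw [Category.assoc, hg, ← Category.assoc, hsc, Category.assoc, hp,
          ← Category.assoc]
        simp [QA]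
      rw [this]
      exact hrk.postcomp _
    · -- `g ≫ sf - 𝟙` factors through `X`
      -- step 1: `k ≫ sc - j A ≫ k'` factors through `X`
      have h1 : FactorsThruSet X (k ≫ sc - L.j A ≫ k') := by
        apply cover_lemma L hA
        simp only [Preadditive.sub_comp, Category.assoc, hsc, hk']
        rw [← Category.assoc, hk, Category.id_comp, Category.comp_id, sub_self]
      -- step 2: `p ≫ sf - k' ≫ j QRA` factors through `X`
      have h2 : FactorsThruSet X (p ≫ sf - k' ≫ L.j QRA) := by
        apply env_lemma L (L.Robj_mem QRA)
        have : L.j A ≫ (p ≫ sf - k' ≫ L.j QRA) =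
            (k ≫ sc - L.j A ≫ k') ≫ L.j QRA := by
          simp only [Preadditive.comp_sub, Preadditive.sub_comp, ← Category.assoc, hp]
          rw [Category.assoc, Category.assoc, hsf, ← Category.assoc, ← Category.assoc]
        rw [this]
        exact h1.postcomp _
      -- step 3: `r RA ≫ k' - 𝟙 QRA` factors through `X`
      have h3 : FactorsThruSet X (L.r RA ≫ k' - 𝟙 QRA) := by
        apply cover_lemma L (L.Qobj_mem_of_D RA hRA).1
        simp [hk', QRA, RA]
      -- conclude
      apply env_lemma L (L.Robj_mem QRA)
      have : L.j QRA ≫ (g ≫ sf - 𝟙 _) =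
          L.r RA ≫ (p ≫ sf - k' ≫ L.j QRA) + (L.r RA ≫ k' - 𝟙 QRA) ≫ L.j QRA := by
        simp only [Preadditive.comp_sub, Preadditive.sub_comp, Category.comp_id,
          Category.id_comp, ← Category.assoc, hg]
        simp only [QRA, RA, Category.id_comp]
        abel
      rw [this]
      exact factorsThruSet_add L (FactorsThruSet.precomp _ h2) (h3.postcomp _)

end LiHomotopy
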